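/- Let ω, ω̂, u ∈ ℝ, M, M̂ > 0, η, η̂ ∈ (0,1]. Consider on ℝ⁶ with coordinates q = (x,y,z,x̂,ŷ,ẑ) the drift vector field b = (−ωy − (M/2)x + uz, ωx − (M/2)y, −ux, −ω̂ŷ − (M̂/2)x̂ + uẑ + x̂ẑE(z,ẑ), ω̂x̂ − (M̂/2)ŷ + ŷẑE(z,ẑ), −ux̂ − (1−ẑ²)E(z,ẑ)) and the diffusion vector field g = (−√(ηM)xz, −√(ηM)yz, √(ηM)(1−z²), −√(η̂M̂)x̂ẑ, −√(η̂M̂)ŷẑ, √(η̂M̂)(1−ẑ²)). Then for f(q) = log(1−ẑ) and every q with ẑ ∈ (−1,1), the infinitesimal generator ℒf(q) := Σᵢ bᵢ(q)∂f/∂qᵢ + (1/2)Σᵢⱼ gᵢ(q)gⱼ(q)∂²f/∂qᵢ∂qⱼ equals (u·x̂ + (1−ẑ²)E(z,ẑ))/(1−ẑ) − (η̂M̂/2)(1+ẑ)². -/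

import Mathlib

/-- E(z,ẑ) := √(η̂M̂)(√(η̂M̂)·ẑ − √(ηM)·z). -/
noncomputable def Efun (η η' M M' z z' : ℝ) : ℝ :=
  Real.sqrt (η' * M') * (Real.sqrt (η' * M') * z' - Real.sqrt (η * M) * z)

/-- Bloch-coordinate drift vector field of the coupled stochastic master equations,
with coordinates q = (x, y, z, x̂, ŷ, ẑ). -/
noncomputable def bdrift (ω ω' u M M' η η' : ℝ) (q : Fin 6 → ℝ) : Fin 6 → ℝ :=
  ![-ω * q 1 - M / 2 * q 0 + u * q 2,
    ω * q 0 - M / 2 * q 1,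
    -u * q 0,
    -ω' * q 4 - M' / 2 * q 3 + u * q 5 + q 3 * q 5 * Efun η η' M M' (q 2) (q 5),
    ω' * q 3 - M' / 2 * q 4 + q 4 * q 5 * Efun η η' M M' (q 2) (q 5),
    -u * q 3 - (1 - (q 5) ^ 2) * Efun η η' M M' (q 2) (q 5)]

/-- Bloch-coordinate diffusion vector field of the coupled stochastic master equations. -/
noncomputable def gdiff (M M' η η' : ℝ) (q : Fin 6 → ℝ) : Fin 6 → ℝ :=
  ![-Real.sqrt (η * M) * q 0 * q 2,
    -Real.sqrt (η * M) * q 1 * q 2,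
    Real.sqrt (η * M) * (1 - (q 2) ^ 2),
    -Real.sqrt (η' * M') * q 3 * q 5,
    -Real.sqrt (η' * M') * q 4 * q 5,
    Real.sqrt (η' * M') * (1 - (q 5) ^ 2)]

/-- The infinitesimal generator ℒf(q) = Σᵢ bᵢ(q)∂f/∂qᵢ + (1/2)Σᵢⱼ gᵢ(q)gⱼ(q)∂²f/∂qᵢ∂qⱼ
of a diffusion with drift `b` and a single diffusion vector field `g`. -/
noncomputable def generator (b g : (Fin 6 → ℝ) → Fin 6 → ℝ)
    (f : (Fin 6 → ℝ) → ℝ) (q : Fin 6 → ℝ) : ℝ :=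
  (∑ i, b q i * fderiv ℝ f q (Pi.single i 1)) +
    (1/2) * ∑ i, ∑ j, g q i * g q j *
      fderiv ℝ (fun p => fderiv ℝ f p (Pi.single i 1)) q (Pi.single j 1)

/-!
`log (1 - ẑ)` depends on the single coordinate `ẑ`, so its Hessian is `φ'' eₖ eₖᵀ` and the
generator collapses to `b₅ φ' + ½ g₅² φ''` with `φ t = log (1 - t)`, `φ' t = -(1 - t)⁻¹`,
`φ'' t = -(1 - t)⁻²`. Since `g₅ = √(η̂M̂) (1 - ẑ)(1 + ẑ)`, the second-order term is
`-(η̂M̂/2)(1 + ẑ)²`.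
-/

open Filter Topology

theorem fderiv_comp_eval_apply {ι : Type*} [Fintype ι] {φ : ℝ → ℝ} {d : ℝ} {p : ι → ℝ}
    {k : ι} (h : HasDerivAt φ d (p k)) (v : ι → ℝ) :
    fderiv ℝ (fun p : ι → ℝ => φ (p k)) p v = d * v k := by
  have hf : HasFDerivAt (fun p : ι → ℝ => φ (p k)) (d • ContinuousLinearMap.proj k) p :=
    h.comp_hasFDerivAt p (hasFDerivAt_apply (𝕜 := ℝ) k p)
  simp [hf.fderiv]

theorem generator_comp_eval (b g : (Fin 6 → ℝ) → Fin 6 → ℝ) {φ φ' : ℝ → ℝ} {c : ℝ}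
    {k : Fin 6} {q : Fin 6 → ℝ} (hφ : ∀ᶠ t in 𝓝 (q k), HasDerivAt φ (φ' t) t)
    (hφ' : HasDerivAt φ' c (q k)) :
    generator b g (fun p => φ (p k)) q = b q k * φ' (q k) + 1 / 2 * g q k ^ 2 * c := by
  have hfirst (i : Fin 6) :
      (fun p => fderiv ℝ (fun p : Fin 6 → ℝ => φ (p k)) p (Pi.single i 1))
        =ᶠ[𝓝 q] fun p => φ' (p k) * Pi.single (M := fun _ => ℝ) i 1 k :=
    ((continuous_apply k).tendsto q |>.eventually hφ).mono fun p hp =>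
      fderiv_comp_eval_apply hp _
  have hsecond (i j : Fin 6) :
      fderiv ℝ (fun p => fderiv ℝ (fun p : Fin 6 → ℝ => φ (p k)) p (Pi.single i 1)) q
        (Pi.single j 1)
        = c * Pi.single (M := fun _ => ℝ) i 1 k * Pi.single (M := fun _ => ℝ) j 1 k := by
    rw [(hfirst i).fderiv_eq]
    exact fderiv_comp_eval_apply (hφ'.mul_const _) _
  simp only [generator, fderiv_comp_eval_apply hφ.self_of_nhds, hsecond, Pi.single_apply,
    mul_ite, mul_one, mul_zero, Finset.sum_ite_eq, Finset.mem_univ, if_true]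
  ring

theorem hasDerivAt_log_one_sub {t : ℝ} (ht : t < 1) :
    HasDerivAt (fun s => Real.log (1 - s)) (-(1 - t)⁻¹) t := by
  simpa [div_eq_inv_mul] using ((hasDerivAt_id t).const_sub 1).log (sub_ne_zero.2 ht.ne')

theorem hasDerivAt_neg_inv_one_sub {t : ℝ} (ht : t < 1) :
    HasDerivAt (fun s => -(1 - s)⁻¹) (-((1 - t) ^ 2)⁻¹) t := by
  simpa using (((hasDerivAt_id t).const_sub 1).fun_inv (sub_ne_zero.2 ht.ne')).fun_neg

theorem generator_of_log_one_sub_zhat_general (ω ω' u M M' η η' : ℝ)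
    (hM' : 0 < M')
    (hη' : η' ∈ Set.Ioc (0 : ℝ) 1)
    (q : Fin 6 → ℝ) (hz' : q 5 ∈ Set.Ioo (-1 : ℝ) 1) :
    generator (bdrift ω ω' u M M' η η') (gdiff M M' η η')
        (fun p => Real.log (1 - p 5)) q
      = (u * q 3 + (1 - (q 5) ^ 2) * Efun η η' M M' (q 2) (q 5)) / (1 - q 5)
        - η' * M' / 2 * (1 + q 5) ^ 2 := by
  have hz : q 5 < 1 := hz'.2
  rw [generator_comp_eval _ _
    ((isOpen_gt' 1).eventually_mem hz |>.mono fun t ht => hasDerivAt_log_one_sub ht)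
    (hasDerivAt_neg_inv_one_sub hz)]
  have hsq : Real.sqrt (η' * M') ^ 2 = η' * M' := Real.sq_sqrt (mul_pos hη'.1 hM').le
  have hne : 1 - q 5 ≠ 0 := sub_ne_zero.2 hz.ne'
  simp only [bdrift, gdiff, Matrix.cons_val]
  field_simp
  rw [hsq]
  ring

theorem generator_of_log_one_sub_zhat (ω ω' u M M' η η' : ℝ)
    (hM : 0 < M) (hM' : 0 < M')
    (hη : η ∈ Set.Ioc (0 : ℝ) 1) (hη' : η' ∈ Set.Ioc (0 : ℝ) 1)
    (q : Fin 6 → ℝ) (hz' : q 5 ∈ Set.Ioo (-1 : ℝ) 1) :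
    generator (bdrift ω ω' u M M' η η') (gdiff M M' η η')
        (fun p => Real.log (1 - p 5)) q
      = (u * q 3 + (1 - (q 5) ^ 2) * Efun η η' M M' (q 2) (q 5)) / (1 - q 5)
        - η' * M' / 2 * (1 + q 5) ^ 2 :=
  generator_of_log_one_sub_zhat_general ω ω' u M M' η η' hM' hη' q hz'
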